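/- Let O be a linear cyclic operad with multiplication, and let C*_λ(O) ⊂ C*(O) denote the cyclic cochains, i.e. f ∈ O(n) with τₙf = (-1)ⁿf. Then for f ∈ C^m_λ(O) and g ∈ C^n_λ(O), the Gerstenhaber bracket {f,g} := f∘̄g − (-1)^{(m-1)(n-1)}g∘̄f (where f∘̄g = (-1)^{(m-1)(n-1)}Σᵢ(-1)^{(n-1)(i-1)}f∘ᵢg) satisfies τ_{m+n-1}{f,g} = (-1)^{m+n-1}{f,g}; in particular the cyclic cochains are closed under the bracket. -/

import Mathlib

/-- A non-symmetric (linear) operad in `k`-modules, via partial compositions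
`comp i : O m → O n → O (m+n-1)` (`i = 1,…,m`), identity `one ∈ O 1`. -/
structure NSOperad (k : Type*) [CommRing k] where
  O : ℕ → Type*
  [addCommGroup : ∀ n, AddCommGroup (O n)]
  [module : ∀ n, Module k (O n)]
  one : O 1
  comp : ∀ {m n : ℕ}, ℕ → O m → O n → O (m + n - 1)
  comp_add_left : ∀ {m n : ℕ} (i : ℕ) (f f' : O m) (g : O n),
    comp i (f + f') g = comp i f g + comp i f' g
  comp_add_right : ∀ {m n : ℕ} (i : ℕ) (f : O m) (g g' : O n),
    comp i f (g + g') = comp i f g + comp i f g'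
  comp_smul_left : ∀ {m n : ℕ} (i : ℕ) (c : k) (f : O m) (g : O n),
    comp i (c • f) g = c • comp i f g
  comp_smul_right : ∀ {m n : ℕ} (i : ℕ) (c : k) (f : O m) (g : O n),
    comp i f (c • g) = c • comp i f g
  comp_one : ∀ {n : ℕ} (i : ℕ), 1 ≤ i → i ≤ n → ∀ f : O n, comp i f one = f
  one_comp : ∀ {n : ℕ} (f : O n), comp 1 one f = (show n = 1 + n - 1 by omega) ▸ f
  assoc_seq : ∀ {m n p : ℕ} (i j : ℕ) (f : O m) (g : O n) (h : O p)
    (hi1 : 1 ≤ i) (hi2 : i ≤ m) (hj1 : 1 ≤ j) (hj2 : j ≤ n),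
    comp (i + j - 1) (comp i f g) h =
      (show m + (n + p - 1) - 1 = m + n - 1 + p - 1 by omega) ▸ comp i f (comp j g h)
  assoc_par : ∀ {m n p : ℕ} (i j : ℕ) (f : O m) (g : O n) (h : O p)
    (hi1 : 1 ≤ i) (hij : i < j) (hj : j ≤ m) (hn : 1 ≤ n),
    comp (j + n - 1) (comp i f g) h =
      (show m + p - 1 + n - 1 = m + n - 1 + p - 1 by omega) ▸ comp i (comp j f h) g

attribute [instance] NSOperad.addCommGroup NSOperad.module

/-- Cast along an equality of arities. -/
def NSOperad.cst {k : Type*} [CommRing k] (P : NSOperad k) {a b : ℕ} (h : a = b)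
    (x : P.O a) : P.O b := h ▸ x

/-- An operad with multiplication: `μ ∈ O(2)`, `e ∈ O(0)` with
`μ∘₁μ = μ∘₂μ` and `μ∘₁e = id = μ∘₂e`. -/
structure OperadWithMult (k : Type*) [CommRing k] extends NSOperad k where
  mu : O 2
  e : O 0
  mu_mu : comp 1 mu mu = comp 2 mu mu
  mu_e_one : comp 1 mu e = one
  mu_e_two : comp 2 mu e = one

variable {k : Type*} [CommRing k]

/-- A cyclic operad with multiplication: an operad with multiplication together
with cyclic operators `τₙ : O(n) → O(n)` satisfying `τₙ^{n+1} = id`,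
`τ_{m+n-1}(f∘₁g) = τₙg ∘ₙ τₘf`, `τ_{m+n-1}(f∘ᵢg) = τₘf ∘_{i-1} g` (`2 ≤ i ≤ m`)
and `τ₂μ = μ`. -/
structure CyclicOperadWithMult (k : Type*) [CommRing k] extends OperadWithMult k where
  tau : ∀ {n : ℕ}, O n → O n
  tau_add : ∀ {n : ℕ} (f g : O n), tau (f + g) = tau f + tau g
  tau_smul : ∀ {n : ℕ} (c : k) (f : O n), tau (c • f) = c • tau f
  tau_pow : ∀ {n : ℕ} (f : O n), (fun x : O n => tau x)^[n + 1] f = f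
  tau_comp_one : ∀ {m n : ℕ} (f : O m) (g : O n) (hm : 1 ≤ m) (hn : 1 ≤ n),
    tau (comp 1 f g) = (show n + m - 1 = m + n - 1 by omega) ▸ comp n (tau g) (tau f)
  tau_comp : ∀ {m n : ℕ} (i : ℕ) (f : O m) (g : O n) (h2 : 2 ≤ i) (him : i ≤ m),
    tau (comp i f g) = comp (i - 1) (tau f) g
  tau_mu : tau mu = mu

variable {k : Type*} [CommRing k]

/-- The pre-Lie operation
`f∘̄g = (-1)^{(m-1)(n-1)} Σᵢ (-1)^{(n-1)(i-1)} f∘ᵢg`. -/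
def obar (P : CyclicOperadWithMult k) {m n : ℕ} (f : P.O m) (g : P.O n) :
    P.O (m + n - 1) :=
  (-1 : ℤ) ^ ((m - 1) * (n - 1)) •
    ∑ i ∈ Finset.range m, (-1 : ℤ) ^ ((n - 1) * i) • P.comp (i + 1) f g

/-- The Gerstenhaber bracket `{f,g} = f∘̄g − (-1)^{(m-1)(n-1)} g∘̄f`. -/
def brk (P : CyclicOperadWithMult k) {m n : ℕ} (f : P.O m) (g : P.O n) :
    P.O (m + n - 1) :=
  obar P f g -
    (-1 : ℤ) ^ ((m - 1) * (n - 1)) • P.cst (by omega) (obar P g f)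

/-! For `i ≥ 2` the cyclic operator turns `f ∘ᵢ g` into `±f ∘ᵢ₋₁ g`, so on cyclic cochains
`τ(f ∘̄ g)` is `(-1)^(m+n-1) f ∘̄ g` up to two boundary terms: `f ∘ₘ g`, which falls off the end
of the shifted sum, and `τ(f ∘₁ g) = ±g ∘ₙ f`. Up to the sign `(-1)^((m-1)(n-1))` the boundary
terms of `f ∘̄ g` and of `g ∘̄ f` agree (`obarDefect_swap`), so they cancel in the bracket. -/

namespace NSOperad

variable (P : NSOperad k)

lemma cst_zsmul {a b : ℕ} (h : a = b) (c : ℤ) (x : P.O a) :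
    P.cst h (c • x) = c • P.cst h x := by
  subst h; rfl

lemma cst_add {a b : ℕ} (h : a = b) (x y : P.O a) :
    P.cst h (x + y) = P.cst h x + P.cst h y := by
  subst h; rfl

@[simp]
lemma cst_cst {a b : ℕ} (h : a = b) (h' : b = a) (x : P.O a) :
    P.cst h' (P.cst h x) = x := by
  subst h; rfl

lemma comp_zsmul_left {m n : ℕ} (i : ℕ) (c : ℤ) (f : P.O m) (g : P.O n) :
    P.comp i (c • f) g = c • P.comp i f g :=
  map_zsmul (AddMonoidHom.mk' (P.comp i · g) (P.comp_add_left i · · g)) c f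

lemma comp_zsmul_right {m n : ℕ} (i : ℕ) (c : ℤ) (f : P.O m) (g : P.O n) :
    P.comp i f (c • g) = c • P.comp i f g :=
  map_zsmul (AddMonoidHom.mk' (P.comp i f ·) (P.comp_add_right i f · ·)) c g

end NSOperad

namespace CyclicOperadWithMult

variable (P : CyclicOperadWithMult k)

def tauAddHom (n : ℕ) : P.O n →+ P.O n := AddMonoidHom.mk' P.tau P.tau_add

lemma tau_zsmul {n : ℕ} (c : ℤ) (x : P.O n) : P.tau (c • x) = c • P.tau x :=
  map_zsmul (P.tauAddHom n) c x

lemma tau_sub {n : ℕ} (x y : P.O n) : P.tau (x - y) = P.tau x - P.tau y :=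
  map_sub (P.tauAddHom n) x y

lemma tau_sum {n : ℕ} {ι : Type*} (s : Finset ι) (F : ι → P.O n) :
    P.tau (∑ i ∈ s, F i) = ∑ i ∈ s, P.tau (F i) :=
  map_sum (P.tauAddHom n) F s

lemma tau_cst {a b : ℕ} (h : a = b) (x : P.O a) :
    P.tau (P.cst h x) = P.cst h (P.tau x) := by
  subst h; rfl

def obarDefect {m n : ℕ} (f : P.O m) (g : P.O n) :
    P.O (m + n - 1) :=
  (-1 : ℤ) ^ (m + n) •
    (P.comp m f g + (-1 : ℤ) ^ ((m - 1) * (n - 1)) • P.cst (by omega) (P.comp n g f))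

variable {P} {m n : ℕ} {f : P.O m} {g : P.O n}

lemma obarDefect_swap :
    (-1 : ℤ) ^ ((m - 1) * (n - 1)) • P.cst (by omega) (obarDefect P g f) = obarDefect P f g := by
  set ε : ℤ := (-1) ^ ((m - 1) * (n - 1))
  have hεε : ε * ε = 1 := by rw [← pow_add, (Even.add_self _).neg_one_pow]
  simp only [obarDefect, NSOperad.cst_zsmul, NSOperad.cst_add, NSOperad.cst_cst, smul_add,
    smul_smul]
  rw [show (-1 : ℤ) ^ (n + m) = (-1) ^ (m + n) by rw [Nat.add_comm], Nat.mul_comm (n - 1),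
    mul_left_comm, hεε, mul_one, mul_comm ε]
  abel

lemma tau_comp_one_of_cyclic (hm : 1 ≤ m) (hn : 1 ≤ n)
    (hf : P.tau f = (-1 : ℤ) ^ m • f) (hg : P.tau g = (-1 : ℤ) ^ n • g) :
    P.tau (P.comp 1 f g) = (-1 : ℤ) ^ (m + n) • P.cst (by omega) (P.comp n g f) := by
  rw [show P.tau (P.comp 1 f g) = P.cst _ (P.comp n (P.tau g) (P.tau f)) from
    P.tau_comp_one f g hm hn, hf, hg, NSOperad.comp_zsmul_left, NSOperad.comp_zsmul_right,
    NSOperad.cst_zsmul, NSOperad.cst_zsmul, smul_smul, mul_comm, ← pow_add]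

lemma tau_comp_succ_of_cyclic {i : ℕ} (hi : 1 ≤ i) (him : i < m)
    (hf : P.tau f = (-1 : ℤ) ^ m • f) :
    P.tau (P.comp (i + 1) f g) = (-1 : ℤ) ^ m • P.comp i f g := by
  rw [P.tau_comp (i + 1) f g (by omega) (by omega), hf, NSOperad.comp_zsmul_left,
    Nat.add_sub_cancel]

lemma tau_obar (hm : 1 ≤ m) (hn : 1 ≤ n)
    (hf : P.tau f = (-1 : ℤ) ^ m • f) (hg : P.tau g = (-1 : ℤ) ^ n • g) :
    P.tau (obar P f g) = (-1 : ℤ) ^ (m + n - 1) • obar P f g + obarDefect P f g := by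
  obtain ⟨m, rfl⟩ : ∃ m', m = m' + 1 := ⟨m - 1, by omega⟩
  obtain ⟨n, rfl⟩ : ∃ n', n = n' + 1 := ⟨n - 1, by omega⟩
  have hfirst := tau_comp_one_of_cyclic hm hn hf hg
  have hrest : ∀ i ∈ Finset.range m, (-1 : ℤ) ^ (n * (i + 1)) • P.tau (P.comp (i + 1 + 1) f g)
      = (-1 : ℤ) ^ (m + n + 1) • (-1 : ℤ) ^ (n * i) • P.comp (i + 1) f g := by
    intro i hi
    rw [tau_comp_succ_of_cyclic (by omega) (by simpa using hi) hf, smul_smul,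
      smul_smul, ← pow_add, ← pow_add]
    congr 2
    ring
  have hεε : (-1 : ℤ) ^ (m * n) * (-1) ^ (m * n) = 1 := by
    rw [← pow_add, (Even.add_self _).neg_one_pow]
  have hsign : (-1 : ℤ) ^ (m + 1 + (n + 1) - 1) = (-1) ^ (m + n + 1) := by
    rw [show m + 1 + (n + 1) - 1 = m + n + 1 by omega]
  simp only [obar, obarDefect, Nat.add_sub_cancel, tau_zsmul, tau_sum]
  rw [Finset.sum_range_succ', Finset.sum_congr rfl hrest, ← Finset.smul_sum, zero_add, hfirst,
    hsign, Finset.sum_range_succ, mul_zero, pow_zero, one_smul, Nat.mul_comm n m]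
  linear_combination (norm := module) ((-1 : ℤ) ^ (m + n) • hεε) • P.comp (m + 1) f g

end CyclicOperadWithMult

open CyclicOperadWithMult NSOperad

/-- Let `O` be a linear cyclic operad with multiplication and
let `f, g` be cyclic cochains (`τₘf = (-1)^m f`, `τₙg = (-1)^n g`).  Then the
Gerstenhaber bracket satisfies `τ_{m+n-1}{f,g} = (-1)^{m+n-1}{f,g}`; in
particular the cyclic cochains are closed under the bracket. -/
theorem stmt19 (P : CyclicOperadWithMult k) {m n : ℕ} (hm : 1 ≤ m) (hn : 1 ≤ n)
    (f : P.O m) (g : P.O n)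
    (hf : P.tau f = (-1 : ℤ) ^ m • f) (hg : P.tau g = (-1 : ℤ) ^ n • g) :
    P.tau (brk P f g) = (-1 : ℤ) ^ (m + n - 1) • brk P f g := by
  rw [brk, tau_sub, tau_zsmul, tau_cst, tau_obar hm hn hf hg, tau_obar hn hm hg hf,
    cst_add, cst_zsmul, smul_add, obarDefect_swap,
    show (-1 : ℤ) ^ (n + m - 1) = (-1) ^ (m + n - 1) by rw [Nat.add_comm], smul_sub,
    smul_comm _ ((-1 : ℤ) ^ _)]
  abel
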